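/- Under the regulator-equation setup (ΠS = AΠ + BΓ, CΠ + H = 0, G = Γ − FΠ), the tracking error of the closed-loop system from initial condition (x₀, w₀) does not change sign componentwise on [0,∞) if and only if the natural output response t ↦ C e^{(A+BF)t} x̃₀ of the nominal system from x̃₀ = x₀ − Πw₀ does not change sign componentwise on [0,∞). -/

import Mathlib

/-!
The deviation `z = x - Π w` of the state from the steady-state manifold obeys the nominal
closed-loop equation `ż = (A + B F) z`: the regulator equation `Π S = A Π + B Γ` together with
`G = Γ - F Π` cancels the exosystem terms. By uniqueness for linear ODEs,
`z t = exp (t (A + B F)) (x₀ - Π w₀)`, and `C Π + H = 0` turns the tracking error into `C z t`.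
So both sign conditions speak about the same functions of `t`.
-/

open NormedSpace Matrix

theorem HasDerivAt.matrix_mulVec {𝕜 : Type*} [NontriviallyNormedField 𝕜] [CompleteSpace 𝕜]
    {m n : Type*} [Fintype m] [Fintype n]
    (P : Matrix m n 𝕜) {w : 𝕜 → n → 𝕜} {w' : n → 𝕜} {t : 𝕜} (hw : HasDerivAt w w' t) :
    HasDerivAt (fun t => P *ᵥ w t) (P *ᵥ w') t :=
  P.mulVecLin.toContinuousLinearMap.hasFDerivAt.comp_hasDerivAt t hw

section LinearODE

attribute [local instance] Matrix.linftyOpNormedAddCommGroup Matrix.linftyOpNormedRing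
  Matrix.linftyOpNormedAlgebra

variable {ι : Type*} [Fintype ι] [DecidableEq ι]

theorem hasDerivAt_exp_smul_mulVec (M : Matrix ι ι ℝ) (v : ι → ℝ) (t : ℝ) :
    HasDerivAt (fun t : ℝ => exp (t • M) *ᵥ v) (M *ᵥ (exp (t • M) *ᵥ v)) t := by
  rw [mulVec_mulVec]
  exact ((Matrix.mulVecBilin ℝ ℝ).flip v).toContinuousLinearMap.hasFDerivAt.comp_hasDerivAt t
    (hasDerivAt_exp_smul_const' M t)

theorem eq_exp_smul_mulVec_of_hasDerivAt {M : Matrix ι ι ℝ} {z : ℝ → ι → ℝ}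
    (hz : ∀ t, HasDerivAt z (M *ᵥ z t) t) (t : ℝ) :
    z t = exp (t • M) *ᵥ z 0 := by
  have hunique := ODE_solution_unique_univ (v := fun _ => M.mulVecLin.toContinuousLinearMap)
    (s := fun _ => Set.univ) (t₀ := 0)
    (fun _ => (ContinuousLinearMap.lipschitz _).lipschitzOnWith)
    (fun t => ⟨hz t, trivial⟩) (fun t => ⟨hasDerivAt_exp_smul_mulVec M (z 0) t, trivial⟩)
    (by simp)
  exact congrFun hunique t

end LinearODE

section Regulator

variable {k l m : Type*} [Fintype l] [Fintype m]

theorem mulVec_add_mulVec_eq_mulVec_sub {R : Type*} [Ring R] {C : Matrix k l R}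
    {Pi : Matrix l m R} {H : Matrix k m R} (h : C * Pi + H = 0) (x : l → R) (w : m → R) :
    C *ᵥ x + H *ᵥ w = C *ᵥ (x - Pi *ᵥ w) := by
  rw [eq_neg_of_add_eq_zero_right h, neg_mulVec, ← mulVec_mulVec, mulVec_sub, sub_eq_add_neg]

theorem hasDerivAt_sub_mulVec_of_mul_add_eq {M : Matrix l l ℝ} {K Pi : Matrix l m ℝ}
    {S : Matrix m m ℝ} (hM : M * Pi + K = Pi * S) {x : ℝ → l → ℝ} {w : ℝ → m → ℝ} {t : ℝ}
    (hx : HasDerivAt x (M *ᵥ x t + K *ᵥ w t) t) (hw : HasDerivAt w (S *ᵥ w t) t) :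
    HasDerivAt (fun t => x t - Pi *ᵥ w t) (M *ᵥ (x t - Pi *ᵥ w t)) t := by
  refine (hx.sub (hw.matrix_mulVec Pi)).congr_deriv ?_
  rw [mulVec_mulVec, ← hM, add_mulVec, ← mulVec_mulVec, mulVec_sub]
  abel

end Regulator

theorem stmt_15 (n p m : ℕ)
    (A : Matrix (Fin n) (Fin n) ℝ) (B : Matrix (Fin n) (Fin p) ℝ)
    (C : Matrix (Fin p) (Fin n) ℝ) (S : Matrix (Fin m) (Fin m) ℝ)
    (H : Matrix (Fin p) (Fin m) ℝ)
    (Pi : Matrix (Fin n) (Fin m) ℝ) (Γ : Matrix (Fin p) (Fin m) ℝ)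
    (F : Matrix (Fin p) (Fin n) ℝ)
    (hreg1 : Pi * S = A * Pi + B * Γ)
    (hreg2 : C * Pi + H = 0)
    (G : Matrix (Fin p) (Fin m) ℝ) (hG : G = Γ - F * Pi)
    (x₀ : Fin n → ℝ) (w₀ : Fin m → ℝ)
    (x : ℝ → Fin n → ℝ) (w : ℝ → Fin m → ℝ)
    (hx0 : x 0 = x₀) (hw0 : w 0 = w₀)
    (hx : ∀ t : ℝ, HasDerivAt x
      ((A + B * F).mulVec (x t) + (B * G).mulVec (w t)) t)
    (hw : ∀ t : ℝ, HasDerivAt w (S.mulVec (w t)) t) :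
    (∀ i : Fin p,
        (∀ t : ℝ, 0 ≤ t → 0 ≤ (C.mulVec (x t) + H.mulVec (w t)) i) ∨
        (∀ t : ℝ, 0 ≤ t → (C.mulVec (x t) + H.mulVec (w t)) i ≤ 0)) ↔
      (∀ i : Fin p,
        (∀ t : ℝ, 0 ≤ t →
          0 ≤ C.mulVec ((NormedSpace.exp (t • (A + B * F))).mulVec
            (x₀ - Pi.mulVec w₀)) i) ∨
        (∀ t : ℝ, 0 ≤ t →
          C.mulVec ((NormedSpace.exp (t • (A + B * F))).mulVec
            (x₀ - Pi.mulVec w₀)) i ≤ 0)) := by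
  have hclosed : (A + B * F) * Pi + B * G = Pi * S := by
    rw [hG, hreg1, Matrix.add_mul, Matrix.mul_sub, Matrix.mul_assoc]
    abel
  have herror : ∀ t, C *ᵥ x t + H *ᵥ w t
      = C *ᵥ (exp (t • (A + B * F)) *ᵥ (x₀ - Pi *ᵥ w₀)) := fun t => by
    rw [mulVec_add_mulVec_eq_mulVec_sub hreg2, eq_exp_smul_mulVec_of_hasDerivAt
      (fun s => hasDerivAt_sub_mulVec_of_mul_add_eq hclosed (hx s) (hw s)) t, hx0, hw0]
  simp only [herror]
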